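/- arXiv:2303.09647 — 5 statements merged into one kernel-verified Lean document; each statement's English description precedes it below -/
import Mathlib

section
/- For any fixed δ_L ∈ (0,1), the function δ_U ↦ C(δ_L, δ_U) is strictly monotonically increasing on the domain [1, ∞), where C(δ_L, δ_U) = (1-π̂)/(-D₀₁) · (log δ_U + ((δ_U-1)/(1-δ_L)) log δ_L)/(1 + π̂(δ_U-1)) + π̂/D₁₀ · (δ_U log δ_U + δ_L((δ_U-1)/(1-δ_L)) log δ_L)/(1 + π̂(δ_U-1)) + λ̄·((δ_U-δ_L)/(1-δ_L))/(1 + π̂(δ_U-1)). -/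
set_option maxHeartbeats 1600000


noncomputable def C (pihat lam D01 D10 dL dU : ℝ) : ℝ :=
  (1 - pihat) / (-D01) *
      ((Real.log dU + ((dU - 1) / (1 - dL)) * Real.log dL) / (1 + pihat * (dU - 1)))
    + pihat / D10 *
      ((dU * Real.log dU + dL * ((dU - 1) / (1 - dL)) * Real.log dL) / (1 + pihat * (dU - 1)))
    + lam * ((dU - dL) / (1 - dL)) / (1 + pihat * (dU - 1))

theorem stmt0 (pihat lam D01 D10 dL : ℝ)
    (hpi : pihat ∈ Set.Ioo (0:ℝ) 1) (hlam : 0 ≤ lam)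
    (hD01 : 0 < D01) (hD10 : 0 < D10) (hdL : dL ∈ Set.Ioo (0:ℝ) 1) :
    StrictMonoOn (fun dU => C pihat lam D01 D10 dL dU) (Set.Ici (1:ℝ)) := by
  obtain ⟨ha0, ha1⟩ := hpi
  obtain ⟨hdL0, hdL1⟩ := hdL
  have h1L : (0:ℝ) < 1 - dL := by linarith
  set L : ℝ := Real.log dL with hL
  -- key log inequalities
  have hk1 : L < -(1 - dL) := by
    have := Real.log_lt_sub_one_of_pos hdL0 (ne_of_lt hdL1)
    linarith
  have hk2 : -(1 - dL) < dL * L := by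
    have h := Real.log_lt_sub_one_of_pos (show (0:ℝ) < 1/dL by positivity)
        (by intro h; rw [div_eq_one_iff_eq (ne_of_gt hdL0)] at h; linarith)
    rw [Real.log_div one_ne_zero (ne_of_gt hdL0), Real.log_one] at h
    have h' : 1 - 1/dL < L := by linarith
    have hc : dL * (1/dL) = 1 := by field_simp
    nlinarith [mul_lt_mul_of_pos_left h' hdL0, hc]
  -- the derivative numerator
  set S : ℝ → ℝ := fun u =>
    (1 - pihat)/D01 * (pihat * Real.log u - (1 - pihat)/u - pihat - L/(1 - dL))
    + pihat/D10 * ((1 - pihat)*Real.log u + (1 - pihat) + pihat*u + dL*L/(1 - dL))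
    + lam/(1 - dL) * (1 - pihat + pihat*dL) with hS
  have key : ∀ u : ℝ, 1 ≤ u →
      HasDerivAt (fun dU => C pihat lam D01 D10 dL dU)
        (S u / (1 + pihat * (u - 1))^2) u := by
    intro u hu
    have hu0 : (0:ℝ) < u := lt_of_lt_of_le one_pos hu
    have hQ : (0:ℝ) < 1 + pihat * (u - 1) := by nlinarith
    have hQ' : HasDerivAt (fun x => 1 + pihat * (x - 1)) pihat u := by
      simpa using (((hasDerivAt_id u).sub_const 1).const_mul pihat).const_add 1
    have hN1 : HasDerivAt (fun x => Real.log x + ((x - 1) / (1 - dL)) * L)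
        (u⁻¹ + 1 / (1 - dL) * L) u := by
      exact (Real.hasDerivAt_log (ne_of_gt hu0)).add
        ((((hasDerivAt_id u).sub_const 1).div_const (1 - dL)).mul_const L)
    have hN2 : HasDerivAt (fun x => x * Real.log x + dL * ((x - 1) / (1 - dL)) * L)
        ((1 * Real.log u + u * u⁻¹) + dL * (1 / (1 - dL)) * L) u := by
      have h1 : HasDerivAt (fun x : ℝ => x * Real.log x)
          (1 * Real.log u + u * u⁻¹) u :=
        (hasDerivAt_id u).mul (Real.hasDerivAt_log (ne_of_gt hu0))
      have h2 : HasDerivAt (fun x : ℝ => dL * ((x - 1) / (1 - dL)) * L)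
          (dL * (1 / (1 - dL)) * L) u := by
        simpa [mul_assoc, mul_comm, mul_left_comm] using
          (((((hasDerivAt_id u).sub_const 1).div_const (1 - dL)).const_mul dL).mul_const L)
      exact h1.add h2
    have hN3 : HasDerivAt (fun x => lam * ((x - dL) / (1 - dL))) (lam * (1 / (1 - dL))) u := by
      simpa using (((hasDerivAt_id u).sub_const dL).div_const (1 - dL)).const_mul lam
    have hBig := (((hN1.div hQ' (ne_of_gt hQ)).const_mul ((1 - pihat) / (-D01))).add
        ((hN2.div hQ' (ne_of_gt hQ)).const_mul (pihat / D10))).add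
        (hN3.div hQ' (ne_of_gt hQ))
    have hfun : (fun dU => C pihat lam D01 D10 dL dU) =
        (fun x =>
          (1 - pihat) / (-D01) * ((Real.log x + ((x - 1) / (1 - dL)) * L) / (1 + pihat * (x - 1)))
          + pihat / D10 * ((x * Real.log x + dL * ((x - 1) / (1 - dL)) * L) / (1 + pihat * (x - 1)))
          + lam * ((x - dL) / (1 - dL)) / (1 + pihat * (x - 1))) := by
      funext x
      simp only [C, hL]
    rw [hfun]
    refine hBig.congr_deriv (Eq.symm ?_)
    rw [hS]
    simp only [div_neg]
    linear_combination
      (-(-((1 - pihat) / D01) * pihat + pihat / D10 * (1 + pihat * (u - 1))) /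
        (1 + pihat * (u - 1)) ^ 2) * mul_inv_cancel₀ hu0.ne'
  apply strictMonoOn_of_deriv_pos (convex_Ici 1)
  · intro u hu
    exact ((key u hu).differentiableAt).continuousAt.continuousWithinAt
  · intro u hu
    rw [interior_Ici] at hu
    have hu1 : (1:ℝ) < u := hu
    have hu' : (1:ℝ) ≤ u := le_of_lt hu1
    rw [(key u hu').deriv]
    have hu0 : (0:ℝ) < u := lt_of_lt_of_le one_pos hu'
    have hQ : (0:ℝ) < 1 + pihat * (u - 1) := by nlinarith
    apply div_pos _ (by positivity)
    rw [hS]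
    have hlog : 0 ≤ Real.log u := Real.log_nonneg hu'
    have hdiv : (1 - pihat)/u ≤ 1 - pihat := by
      apply div_le_self (by linarith) hu'
    have hb1 : 0 < pihat * Real.log u - (1 - pihat)/u - pihat - L/(1 - dL) := by
      have h1 : L/(1 - dL) < -1 := by
        rw [div_lt_iff₀ h1L]; linarith
      nlinarith [mul_nonneg (le_of_lt ha0) hlog]
    have hb2 : 0 < (1 - pihat)*Real.log u + (1 - pihat) + pihat*u + dL*L/(1 - dL) := by
      have h2 : -1 < dL*L/(1 - dL) := by
        rw [lt_div_iff₀ h1L]; linarith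
      nlinarith [mul_nonneg (by linarith : (0:ℝ) ≤ 1 - pihat) hlog]
    have hb3 : 0 ≤ lam/(1 - dL) * (1 - pihat + pihat*dL) := by
      apply mul_nonneg (by positivity)
      nlinarith
    have ht1 : 0 < (1 - pihat)/D01 * (pihat * Real.log u - (1 - pihat)/u - pihat - L/(1 - dL)) :=
      mul_pos (div_pos (by linarith) hD01) hb1
    have ht2 : 0 < pihat/D10 * ((1 - pihat)*Real.log u + (1 - pihat) + pihat*u + dL*L/(1 - dL)) :=
      mul_pos (div_pos ha0 hD10) hb2
    linarith
end

section
/- For any fixed δ_U > 1 and λ̄ > 0, the partial derivative of C(δ_L, δ_U) with respect to δ_L tends to -∞ as δ_L → 0⁺ and tends to +∞ as δ_L → 1⁻. -/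
open Real Filter Set Topology

lemma hasDerivC (pihat lam D01 D10 dU : ℝ) (hD01 : D01 ≠ 0) (hD10 : D10 ≠ 0)
    (hK : 1 + pihat * (dU - 1) ≠ 0) {x : ℝ} (hx0 : 0 < x) (hx1 : x < 1) :
    HasDerivAt (fun y => C pihat lam D01 D10 y dU)
      ((dU - 1) / (x * (1 - x) ^ 2) *
        ((1 - pihat) / (-D01) / (1 + pihat * (dU - 1)) * (x * Real.log x + (1 - x))
          + pihat / D10 / (1 + pihat * (dU - 1)) * (x * Real.log x + x * (1 - x))
          + lam / (1 + pihat * (dU - 1)) * x)) x := by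
  have hx : x ≠ 0 := hx0.ne'
  have h1x : (1 : ℝ) - x ≠ 0 := by intro h; nlinarith
  have h1 : HasDerivAt (fun y : ℝ => 1 - y) (-1) x := by
    simpa using (hasDerivAt_id x).const_sub 1
  have hlog : HasDerivAt Real.log x⁻¹ x := Real.hasDerivAt_log hx
  have hg : HasDerivAt (fun y : ℝ => (dU - 1) / (1 - y))
      ((0 * (1 - x) - (dU - 1) * (-1)) / (1 - x) ^ 2) x :=
    (hasDerivAt_const x (dU - 1)).div h1 h1x
  have hnum : HasDerivAt (fun y : ℝ => dU - y) (-1) x := by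
    simpa using (hasDerivAt_id x).const_sub dU
  have H :=
    (((((hasDerivAt_const x (Real.log dU)).add (hg.mul hlog)).div_const
          (1 + pihat * (dU - 1))).const_mul ((1 - pihat) / (-D01))).add
        ((((hasDerivAt_const x (dU * Real.log dU)).add
            (((hasDerivAt_id x).mul hg).mul hlog)).div_const
          (1 + pihat * (dU - 1))).const_mul (pihat / D10))).add
      (((hnum.div h1 h1x).const_mul lam).div_const (1 + pihat * (dU - 1)))
  have heq : (dU - 1) / (x * (1 - x) ^ 2) *
        ((1 - pihat) / (-D01) / (1 + pihat * (dU - 1)) * (x * Real.log x + (1 - x))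
          + pihat / D10 / (1 + pihat * (dU - 1)) * (x * Real.log x + x * (1 - x))
          + lam / (1 + pihat * (dU - 1)) * x) =
      (1 - pihat) / (-D01) *
          ((0 + ((0 * (1 - x) - (dU - 1) * (-1)) / (1 - x) ^ 2 * Real.log x +
            (dU - 1) / (1 - x) * x⁻¹)) / (1 + pihat * (dU - 1)))
        + pihat / D10 *
          ((0 + ((1 * ((dU - 1) / (1 - x)) +
              x * ((0 * (1 - x) - (dU - 1) * (-1)) / (1 - x) ^ 2)) * Real.log x +
            x * ((dU - 1) / (1 - x)) * x⁻¹)) / (1 + pihat * (dU - 1)))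
        + lam * ((-1 * (1 - x) - (dU - x) * -1) / (1 - x) ^ 2) / (1 + pihat * (dU - 1)) := by
    field_simp
    ring
  rw [heq]
  exact H

theorem stmt1 (pihat lam D01 D10 dU : ℝ)
    (hpi : pihat ∈ Set.Ioo (0:ℝ) 1) (hlam : 0 < lam)
    (hD01 : 0 < D01) (hD10 : 0 < D10) (hdU : 1 < dU) :
    Filter.Tendsto (fun dL => deriv (fun x => C pihat lam D01 D10 x dU) dL)
        (nhdsWithin 0 (Set.Ioi (0:ℝ))) Filter.atBot ∧
      Filter.Tendsto (fun dL => deriv (fun x => C pihat lam D01 D10 x dU) dL)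
        (nhdsWithin 1 (Set.Iio (1:ℝ))) Filter.atTop := by
  obtain ⟨hp0, hp1⟩ := hpi
  have hK : (0:ℝ) < 1 + pihat * (dU - 1) := by nlinarith
  set K := 1 + pihat * (dU - 1) with hKdef
  set A := (1 - pihat) / (-D01) / K with hAdef
  set B := pihat / D10 / K with hBdef
  have hA : A < 0 := by
    apply div_neg_of_neg_of_pos _ hK
    apply div_neg_of_pos_of_neg (by linarith) (by linarith)
  have hlamK : 0 < lam / K := div_pos hlam hK
  set G : ℝ → ℝ := fun x =>
    A * (x * Real.log x + (1 - x)) + B * (x * Real.log x + x * (1 - x)) + lam / K * x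
    with hGdef
  set f : ℝ → ℝ := fun x => (dU - 1) / (x * (1 - x) ^ 2) * G x with hfdef
  have hderiv : ∀ x ∈ Ioo (0:ℝ) 1, deriv (fun x => C pihat lam D01 D10 x dU) x = f x := by
    intro x hx
    exact (hasDerivC pihat lam D01 D10 dU hD01.ne' hD10.ne' hK.ne' hx.1 hx.2).deriv
  -- eventual equality near 0⁺ and 1⁻
  have heq0 : (fun dL => deriv (fun x => C pihat lam D01 D10 x dU) dL) =ᶠ[𝓝[>] (0:ℝ)] f :=
    eventually_of_mem (Ioo_mem_nhdsGT_of_mem ⟨le_refl _, one_pos⟩) hderiv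
  have heq1 : (fun dL => deriv (fun x => C pihat lam D01 D10 x dU) dL) =ᶠ[𝓝[<] (1:ℝ)] f :=
    eventually_of_mem (Ioo_mem_nhdsLT_of_mem ⟨one_pos, le_refl _⟩) hderiv
  have hxlog0 : Tendsto (fun x : ℝ => x * Real.log x) (𝓝[>] (0:ℝ)) (𝓝 0) := by
    have := tendsto_log_mul_rpow_nhdsGT_zero (one_pos)
    simp only [Real.rpow_one] at this
    simpa [mul_comm] using this
  have hid0 : Tendsto (fun x : ℝ => x) (𝓝[>] (0:ℝ)) (𝓝 0) :=
    tendsto_id.mono_left nhdsWithin_le_nhds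
  have hid1 : Tendsto (fun x : ℝ => x) (𝓝[<] (1:ℝ)) (𝓝 1) :=
    tendsto_id.mono_left nhdsWithin_le_nhds
  have hxlog1 : Tendsto (fun x : ℝ => x * Real.log x) (𝓝[<] (1:ℝ)) (𝓝 0) := by
    have : ContinuousAt (fun x : ℝ => x * Real.log x) 1 :=
      continuousAt_id.mul (Real.continuousAt_log one_ne_zero)
    simpa [Real.log_one] using this.tendsto.mono_left nhdsWithin_le_nhds
  -- prefactor tends to ∞ at both endpoints
  have hPden0 : Tendsto (fun x : ℝ => x * (1 - x) ^ 2) (𝓝[>] (0:ℝ)) (𝓝[>] (0:ℝ)) := by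
    apply tendsto_nhdsWithin_of_tendsto_nhds_of_eventually_within
    · have h := hid0.mul ((((tendsto_const_nhds :
          Tendsto (fun _ : ℝ => (1:ℝ)) (𝓝[>] (0:ℝ)) (𝓝 1))).sub hid0).pow 2)
      simpa using h
    · filter_upwards [Ioo_mem_nhdsGT_of_mem (⟨le_refl _, one_pos⟩ : (0:ℝ) ∈ Ico 0 1)]
        with x hx
      have : (0:ℝ) < 1 - x := by linarith [hx.2]
      exact mul_pos hx.1 (by positivity)
  have hPden1 : Tendsto (fun x : ℝ => x * (1 - x) ^ 2) (𝓝[<] (1:ℝ)) (𝓝[>] (0:ℝ)) := by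
    apply tendsto_nhdsWithin_of_tendsto_nhds_of_eventually_within
    · have h := hid1.mul ((((tendsto_const_nhds :
          Tendsto (fun _ : ℝ => (1:ℝ)) (𝓝[<] (1:ℝ)) (𝓝 1))).sub hid1).pow 2)
      simpa using h
    · filter_upwards [Ioo_mem_nhdsLT_of_mem (⟨one_pos, le_refl _⟩ : (1:ℝ) ∈ Ioc 0 1)]
        with x hx
      have : (0:ℝ) < 1 - x := by linarith [hx.2]
      exact mul_pos hx.1 (by positivity)
  have hP0 : Tendsto (fun x : ℝ => (dU - 1) / (x * (1 - x) ^ 2)) (𝓝[>] (0:ℝ)) atTop := by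
    simp only [div_eq_mul_inv]
    exact (tendsto_inv_nhdsGT_zero.comp hPden0).const_mul_atTop (by linarith)
  have hP1 : Tendsto (fun x : ℝ => (dU - 1) / (x * (1 - x) ^ 2)) (𝓝[<] (1:ℝ)) atTop := by
    simp only [div_eq_mul_inv]
    exact (tendsto_inv_nhdsGT_zero.comp hPden1).const_mul_atTop (by linarith)
  have hG0 : Tendsto G (𝓝[>] (0:ℝ)) (𝓝 A) := by
    have : Tendsto G (𝓝[>] (0:ℝ))
        (𝓝 (A * (0 + (1 - 0)) + B * (0 + 0 * (1 - 0)) + lam / K * 0)) := by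
      exact (((hxlog0.add (tendsto_const_nhds.sub hid0)).const_mul A).add
        ((hxlog0.add (hid0.mul (tendsto_const_nhds.sub hid0))).const_mul B)).add
        (hid0.const_mul (lam / K))
    simpa using this
  have hG1 : Tendsto G (𝓝[<] (1:ℝ)) (𝓝 (lam / K)) := by
    have : Tendsto G (𝓝[<] (1:ℝ))
        (𝓝 (A * (0 + (1 - 1)) + B * (0 + 1 * (1 - 1)) + lam / K * 1)) := by
      exact (((hxlog1.add (tendsto_const_nhds.sub hid1)).const_mul A).add
        ((hxlog1.add (hid1.mul (tendsto_const_nhds.sub hid1))).const_mul B)).add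
        (hid1.const_mul (lam / K))
    simpa using this
  constructor
  · exact Tendsto.congr' heq0.symm (hP0.atTop_mul_neg hA hG0)
  · exact Tendsto.congr' heq1.symm (hP1.atTop_mul_pos hlamK hG1)
end

section
/- For any fixed δ_U > 1 and λ̄ > 0, the function δ_L ↦ C(δ_L, δ_U) is μ-strongly convex on (0,1) with μ = ((δ_U-1)/(1 + π̂(δ_U-1))) · ((2/3)(1-π̂)/D₀₁ + (1/3)π̂/D₁₀ + λ̄); in particular its second derivative in δ_L is bounded below by μ on (0,1). -/
/-- First derivative of `C` in `dL`. -/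
noncomputable def Cf1 (pihat lam D01 D10 dU : ℝ) : ℝ → ℝ := fun y =>
  (1 - pihat) / (-D01) *
      ((dU - 1) * (1/(y*(1-y)) + Real.log y/(1-y)^2)) / (1 + pihat * (dU - 1))
    + pihat / D10 *
      ((dU - 1) * ((Real.log y + 1)/(1-y) + y * Real.log y/(1-y)^2)) / (1 + pihat * (dU - 1))
    + lam * ((dU - 1)/(1-y)^2) / (1 + pihat * (dU - 1))

/-- Second derivative of `C` in `dL`. -/
noncomputable def Cf2 (pihat lam D01 D10 dU : ℝ) : ℝ → ℝ := fun x =>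
  (1 - pihat) / (-D01) *
      ((dU - 1) * ((3*x-1)/(x^2*(1-x)^2) + 2*Real.log x/(1-x)^3)) / (1 + pihat * (dU - 1))
    + pihat / D10 *
      ((dU - 1) * ((x+1)/(x*(1-x)^2) + 2*Real.log x/(1-x)^3)) / (1 + pihat * (dU - 1))
    + lam * ((dU - 1)*(2/(1-x)^3)) / (1 + pihat * (dU - 1))

lemma logIneq1 {x : ℝ} (hx0 : 0 < x) (hx1 : x < 1) :
    (3*x-1)*(1-x)/x^2 + 2*Real.log x ≤ -(2/3)*(1-x)^3 := by
  have hmono : MonotoneOn (fun y : ℝ => (3*y-1)*(1-y)/y^2 + 2*Real.log y + (2/3)*(1-y)^3)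
      (Set.Ioc (0:ℝ) 1) := by
    apply monotoneOn_of_hasDerivWithinAt_nonneg (f' := fun y => 2*(1-y)^2*(1/y^3-1))
      (convex_Ioc 0 1)
    · apply ContinuousOn.add
      apply ContinuousOn.add
      · exact ((continuousOn_const.mul (continuous_id.continuousOn)).sub continuousOn_const |>.mul
          (continuousOn_const.sub continuous_id.continuousOn)).div
          (continuous_pow 2 |>.continuousOn) (fun y hy => pow_ne_zero 2 (ne_of_gt hy.1))
      · exact continuousOn_const.mul (Real.continuousOn_log.mono (fun y hy => ne_of_gt hy.1))
      · fun_prop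
    · intro y hy
      rw [interior_Ioc] at hy
      have hy0 : y ≠ 0 := ne_of_gt hy.1
      have hw : (1:ℝ) - y ≠ 0 := by have := hy.2; intro h; linarith
      have hc := ((((((hasDerivAt_id y).const_mul 3).sub_const 1).mul
            ((hasDerivAt_id y).const_sub 1)).div (hasDerivAt_pow 2 y)
            (pow_ne_zero 2 hy0)).add ((Real.hasDerivAt_log hy0).const_mul 2)).add
            ((((hasDerivAt_id y).const_sub 1).pow 3).const_mul (2/3))
      have h1 : HasDerivAt (fun y : ℝ => (3*y-1)*(1-y)/y^2 + 2*Real.log y + (2/3)*(1-y)^3)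
          (2*(1-y)^2*(1/y^3-1)) y := by
        refine hc.congr_deriv ?_
        simp only [id, Pi.mul_apply, Pi.div_apply, Pi.pow_apply, Pi.add_apply, Pi.sub_apply, Nat.cast_ofNat]
        field_simp
        ring
      exact h1.hasDerivWithinAt
    · intro y hy
      rw [interior_Ioc] at hy
      have h3 : y^3 ≤ 1 := by nlinarith [hy.1, hy.2, sq_nonneg y, sq_nonneg (1-y)]
      have hp : (0:ℝ) < y^3 := pow_pos hy.1 3
      have h1 : (1:ℝ) ≤ 1/y^3 := by rw [le_div_iff₀ hp]; linarith
      exact mul_nonneg (by positivity) (by linarith)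
  have h := hmono ⟨hx0, hx1.le⟩ ⟨one_pos, le_refl 1⟩ hx1.le
  norm_num [Real.log_one] at h
  linarith

lemma logIneq2 {x : ℝ} (hx0 : 0 < x) (hx1 : x < 1) :
    (1-x)^3/3 ≤ (x+1)*(1-x)/x + 2*Real.log x := by
  have hanti : AntitoneOn (fun y : ℝ => (y+1)*(1-y)/y + 2*Real.log y - (1-y)^3/3)
      (Set.Ioc (0:ℝ) 1) := by
    apply antitoneOn_of_hasDerivWithinAt_nonpos (f' := fun y => -((1-y)^2*(1/y^2-1)))
      (convex_Ioc 0 1)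
    · apply ContinuousOn.sub
      apply ContinuousOn.add
      · exact ((continuous_id.continuousOn.add continuousOn_const).mul
          (continuousOn_const.sub continuous_id.continuousOn)).div
          continuous_id.continuousOn (fun y hy => ne_of_gt hy.1)
      · exact continuousOn_const.mul (Real.continuousOn_log.mono (fun y hy => ne_of_gt hy.1))
      · fun_prop
    · intro y hy
      rw [interior_Ioc] at hy
      have hy0 : y ≠ 0 := ne_of_gt hy.1
      have hw : (1:ℝ) - y ≠ 0 := by have := hy.2; intro h; linarith
      have hc := (((((hasDerivAt_id y).add_const 1).mul
            ((hasDerivAt_id y).const_sub 1)).div (hasDerivAt_id y) hy0).add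
            ((Real.hasDerivAt_log hy0).const_mul 2)).sub
            ((((hasDerivAt_id y).const_sub 1).pow 3).div_const 3)
      have h1 : HasDerivAt (fun y : ℝ => (y+1)*(1-y)/y + 2*Real.log y - (1-y)^3/3)
          (-((1-y)^2*(1/y^2-1))) y := by
        refine hc.congr_deriv ?_
        simp only [id, Pi.mul_apply, Pi.div_apply, Pi.pow_apply, Pi.add_apply, Pi.sub_apply, Nat.cast_ofNat]
        field_simp
        ring
      exact h1.hasDerivWithinAt
    · intro y hy
      rw [interior_Ioc] at hy
      have h3 : y^2 ≤ 1 := by nlinarith [hy.1, hy.2]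
      have hp : (0:ℝ) < y^2 := pow_pos hy.1 2
      have h1 : (1:ℝ) ≤ 1/y^2 := by rw [le_div_iff₀ hp]; linarith
      have : 0 ≤ (1-y)^2*(1/y^2-1) := mul_nonneg (by positivity) (by linarith)
      linarith
  have h := hanti ⟨hx0, hx1.le⟩ ⟨one_pos, le_refl 1⟩ hx1.le
  norm_num [Real.log_one] at h
  linarith

lemma hasDerivAt_C (pihat lam D01 D10 dU : ℝ)
    {x : ℝ} (hx0 : 0 < x) (hx1 : x < 1) :
    HasDerivAt (fun y => C pihat lam D01 D10 y dU) (Cf1 pihat lam D01 D10 dU x) x := by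
  have hx0' : x ≠ 0 := ne_of_gt hx0
  have hw : (1:ℝ) - x ≠ 0 := by intro h; linarith
  have hwd : HasDerivAt (fun y : ℝ => 1 - y) (-1) x := by
    simpa using (hasDerivAt_id x).const_sub 1
  have hq : HasDerivAt (fun y : ℝ => (dU - 1) / (1 - y))
      ((0 * (1 - x) - (dU - 1) * (-1)) / (1 - x)^2) x :=
    (hasDerivAt_const x (dU - 1)).div hwd hw
  have hlog := Real.hasDerivAt_log hx0'
  have hu := hq.mul hlog
  have h1 := (((hasDerivAt_const x (Real.log dU)).add hu).div_const
      (1 + pihat * (dU - 1))).const_mul ((1 - pihat) / (-D01))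
  have hv := ((hasDerivAt_id x).mul hq).mul hlog
  have h2 := (((hasDerivAt_const x (dU * Real.log dU)).add hv).div_const
      (1 + pihat * (dU - 1))).const_mul (pihat / D10)
  have hnum : HasDerivAt (fun y : ℝ => dU - y) (-1) x := by
    simpa using (hasDerivAt_id x).const_sub dU
  have h3 := ((hnum.div hwd hw).const_mul lam).div_const (1 + pihat * (dU - 1))
  have hc := (h1.add h2).add h3
  unfold C Cf1
  refine hc.congr_deriv ?_
  have e1 : (0:ℝ) + ((0 * (1 - x) - (dU - 1) * -1) / (1 - x) ^ 2 * Real.log x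
      + (dU - 1) / (1 - x) * x⁻¹)
      = (dU - 1) * (1/(x*(1-x)) + Real.log x/(1-x)^2) := by
    field_simp
    ring
  have e2 : (0:ℝ) + ((1 * ((dU - 1) / (1 - x)) + id x * ((0 * (1 - x) - (dU - 1) * -1) / (1 - x) ^ 2)) * Real.log x
      + id x * ((dU - 1) / (1 - x)) * x⁻¹)
      = (dU - 1) * ((Real.log x + 1)/(1-x) + x * Real.log x/(1-x)^2) := by
    simp only [id]
    field_simp
    ring
  have e3 : ((-1 * (1 - x) - (dU - x) * -1) / (1 - x)^2 : ℝ) = (dU - 1)/(1-x)^2 := by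
    field_simp
    ring
  simp only [Pi.mul_apply]
  rw [e1, e2, e3]
  ring

lemma hasDerivAt_Cf1 (pihat lam D01 D10 dU : ℝ)
    {x : ℝ} (hx0 : 0 < x) (hx1 : x < 1) :
    HasDerivAt (Cf1 pihat lam D01 D10 dU) (Cf2 pihat lam D01 D10 dU x) x := by
  have hx0' : x ≠ 0 := ne_of_gt hx0
  have hw : (1:ℝ) - x ≠ 0 := by intro h; linarith
  have hwd : HasDerivAt (fun y : ℝ => 1 - y) (-1) x := by
    simpa using (hasDerivAt_id x).const_sub 1
  have hlog := Real.hasDerivAt_log hx0'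
  have hb1 := (hasDerivAt_const x (1:ℝ)).div ((hasDerivAt_id x).mul hwd) (mul_ne_zero hx0' hw)
  have hb2 := hlog.div (hwd.pow 2) (pow_ne_zero 2 hw)
  have h1 := (((hb1.add hb2).const_mul (dU - 1)).const_mul ((1 - pihat) / (-D01))).div_const
      (1 + pihat * (dU - 1))
  have hb3 := (hlog.add_const 1).div hwd hw
  have hb4 := ((hasDerivAt_id x).mul hlog).div (hwd.pow 2) (pow_ne_zero 2 hw)
  have h2 := (((hb3.add hb4).const_mul (dU - 1)).const_mul (pihat / D10)).div_const
      (1 + pihat * (dU - 1))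
  have h3 := (((hasDerivAt_const x (dU - 1)).div (hwd.pow 2) (pow_ne_zero 2 hw)).const_mul
      lam).div_const (1 + pihat * (dU - 1))
  have hc := (h1.add h2).add h3
  unfold Cf1 Cf2
  refine hc.congr_deriv ?_
  simp only [id, Pi.mul_apply, Pi.div_apply, Pi.pow_apply, Pi.add_apply, Pi.sub_apply, Nat.cast_ofNat]
  congr 1
  · congr 1
    · congr 2
      field_simp
      ring
    · congr 2
      field_simp
      ring
  · congr 2
    field_simp
    ring

set_option maxHeartbeats 2000000 in
theorem stmt2 (pihat lam D01 D10 dU : ℝ)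
    (hpi : pihat ∈ Set.Ioo (0:ℝ) 1) (hlam : 0 < lam)
    (hD01 : 0 < D01) (hD10 : 0 < D10) (hdU : 1 < dU) :
    StrongConvexOn (Set.Ioo (0:ℝ) 1)
        (((dU - 1) / (1 + pihat * (dU - 1))) *
          ((2/3) * (1 - pihat) / D01 + (1/3) * pihat / D10 + lam))
        (fun dL => C pihat lam D01 D10 dL dU) ∧
      ∀ dL ∈ Set.Ioo (0:ℝ) 1,
        ((dU - 1) / (1 + pihat * (dU - 1))) *
            ((2/3) * (1 - pihat) / D01 + (1/3) * pihat / D10 + lam) ≤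
          deriv (deriv (fun x => C pihat lam D01 D10 x dU)) dL := by
  obtain ⟨hpi0, hpi1⟩ := hpi
  set M : ℝ := ((dU - 1) / (1 + pihat * (dU - 1))) *
      ((2/3) * (1 - pihat) / D01 + (1/3) * pihat / D10 + lam) with hM
  have hE0 : (0:ℝ) < dU - 1 := by linarith
  have hK0 : (0:ℝ) < 1 + pihat * (dU - 1) := by nlinarith
  have hA : (1 - pihat) / (-D01) ≤ 0 := by
    rw [div_neg]
    have : 0 ≤ (1 - pihat) / D01 := div_nonneg (by linarith) hD01.le
    linarith
  have hB : (0:ℝ) ≤ pihat / D10 := div_nonneg hpi0.le hD10.le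
  -- key second-derivative bound
  have key : ∀ x ∈ Set.Ioo (0:ℝ) 1, M ≤ Cf2 pihat lam D01 D10 dU x := by
    intro x hx
    obtain ⟨hx0, hx1⟩ := hx
    have hx0' : x ≠ 0 := ne_of_gt hx0
    have hw0 : (0:ℝ) < 1 - x := by linarith
    have hw : (1:ℝ) - x ≠ 0 := ne_of_gt hw0
    have hw3 : (0:ℝ) < (1-x)^3 := pow_pos hw0 3
    have hI1 : (3*x-1)/(x^2*(1-x)^2) + 2*Real.log x/(1-x)^3 ≤ -(2/3) := by
      have e : (3*x-1)/(x^2*(1-x)^2) + 2*Real.log x/(1-x)^3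
          = ((3*x-1)*(1-x)/x^2 + 2*Real.log x)/(1-x)^3 := by
        field_simp
      rw [e, div_le_iff₀ hw3]
      have := logIneq1 hx0 hx1
      nlinarith [this]
    have hI2 : (1/3 : ℝ) ≤ (x+1)/(x*(1-x)^2) + 2*Real.log x/(1-x)^3 := by
      have e : (x+1)/(x*(1-x)^2) + 2*Real.log x/(1-x)^3
          = ((x+1)*(1-x)/x + 2*Real.log x)/(1-x)^3 := by
        field_simp
      rw [e, le_div_iff₀ hw3]
      have := logIneq2 hx0 hx1
      nlinarith [this]
    have hI3 : (1:ℝ) ≤ 2/(1-x)^3 := by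
      rw [le_div_iff₀ hw3]
      nlinarith [pow_le_one₀ hw0.le (by linarith : (1:ℝ) - x ≤ 1) (n := 3)]
    have hMeq : M = (dU - 1) * (-((2:ℝ)/3) * ((1 - pihat) / (-D01))
        + (1/3) * (pihat / D10) + lam) / (1 + pihat * (dU - 1)) := by
      rw [hM, div_neg]
      ring
    set a := (1 - pihat) / (-D01) with ha
    set b := pihat / D10 with hb
    set I1 := (3*x-1)/(x^2*(1-x)^2) + 2*Real.log x/(1-x)^3 with hI1d
    set I2 := (x+1)/(x*(1-x)^2) + 2*Real.log x/(1-x)^3 with hI2d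
    have t1 : 0 ≤ a * (I1 + 2/3) := by
      nlinarith [mul_nonneg (neg_nonneg.2 hA) (neg_nonneg.2 (show I1 + 2/3 ≤ 0 by linarith))]
    have t2 : 0 ≤ b * (I2 - 1/3) := mul_nonneg hB (by linarith)
    have t3 : 0 ≤ lam * (2/(1-x)^3 - 1) := mul_nonneg hlam.le (by linarith)
    have hquot : 0 ≤ (dU - 1) * (a * (I1 + 2/3) + b * (I2 - 1/3) + lam * (2/(1-x)^3 - 1))
        / (1 + pihat * (dU - 1)) :=
      div_nonneg (mul_nonneg hE0.le (by linarith)) hK0.le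
    have hiden : Cf2 pihat lam D01 D10 dU x - M
        = (dU - 1) * (a * (I1 + 2/3) + b * (I2 - 1/3) + lam * (2/(1-x)^3 - 1))
          / (1 + pihat * (dU - 1)) := by
      rw [hMeq]
      unfold Cf2
      rw [← ha, ← hb, ← hI1d, ← hI2d]
      ring
    linarith [hquot, hiden.ge, hiden.le]
  have hd1 : ∀ x ∈ Set.Ioo (0:ℝ) 1,
      HasDerivAt (fun y => C pihat lam D01 D10 y dU) (Cf1 pihat lam D01 D10 dU x) x :=
    fun x hx => hasDerivAt_C pihat lam D01 D10 dU hx.1 hx.2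
  have hd2 : ∀ x ∈ Set.Ioo (0:ℝ) 1,
      HasDerivAt (Cf1 pihat lam D01 D10 dU) (Cf2 pihat lam D01 D10 dU x) x :=
    fun x hx => hasDerivAt_Cf1 pihat lam D01 D10 dU hx.1 hx.2
  constructor
  · rw [strongConvexOn_iff_convex]
    have hfun : (fun x : ℝ => C pihat lam D01 D10 x dU - M / 2 * ‖x‖^2)
        = fun x : ℝ => C pihat lam D01 D10 x dU - M / 2 * x^2 := by
      funext y
      rw [Real.norm_eq_abs, sq_abs]
    rw [hfun]
    have hg : ∀ x ∈ Set.Ioo (0:ℝ) 1,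
        HasDerivAt (fun y : ℝ => C pihat lam D01 D10 y dU - M / 2 * y^2)
          (Cf1 pihat lam D01 D10 dU x - M * x) x := by
      intro x hx
      have hq : HasDerivAt (fun y : ℝ => M / 2 * y^2) (M * x) x := by
        have := (hasDerivAt_pow 2 x).const_mul (M / 2)
        refine this.congr_deriv ?_
        ring
      exact (hd1 x hx).sub hq
    have hg2 : ∀ x ∈ Set.Ioo (0:ℝ) 1,
        HasDerivAt (fun y : ℝ => Cf1 pihat lam D01 D10 dU y - M * y)
          (Cf2 pihat lam D01 D10 dU x - M) x := by
      intro x hx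
      exact (hd2 x hx).sub (by simpa using (hasDerivAt_id x).const_mul M)
    have hEq : ∀ x ∈ Set.Ioo (0:ℝ) 1,
        deriv (fun y : ℝ => C pihat lam D01 D10 y dU - M / 2 * y^2) x
          = Cf1 pihat lam D01 D10 dU x - M * x :=
      fun x hx => (hg x hx).deriv
    apply convexOn_of_deriv2_nonneg (convex_Ioo 0 1)
    · intro x hx
      exact (hg x hx).continuousAt.continuousWithinAt
    · rw [interior_Ioo]
      intro x hx
      exact (hg x hx).differentiableAt.differentiableWithinAt
    · rw [interior_Ioo]
      intro x hx
      have ev : deriv (fun y : ℝ => C pihat lam D01 D10 y dU - M / 2 * y^2)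
          =ᶠ[nhds x] fun y : ℝ => Cf1 pihat lam D01 D10 dU y - M * y := by
        filter_upwards [isOpen_Ioo.mem_nhds hx] with y hy using hEq y hy
      exact ((hg2 x hx).differentiableAt.congr_of_eventuallyEq ev).differentiableWithinAt
    · rw [interior_Ioo]
      intro x hx
      have ev : deriv (fun y : ℝ => C pihat lam D01 D10 y dU - M / 2 * y^2)
          =ᶠ[nhds x] fun y : ℝ => Cf1 pihat lam D01 D10 dU y - M * y := by
        filter_upwards [isOpen_Ioo.mem_nhds hx] with y hy using hEq y hy
      have : deriv^[2] (fun y : ℝ => C pihat lam D01 D10 y dU - M / 2 * y^2) x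
          = Cf2 pihat lam D01 D10 dU x - M := by
        show deriv (deriv (fun y : ℝ => C pihat lam D01 D10 y dU - M / 2 * y^2)) x = _
        rw [ev.deriv_eq, (hg2 x hx).deriv]
      rw [this]
      have := key x hx
      linarith
  · intro dL hdL
    have ev : deriv (fun y => C pihat lam D01 D10 y dU)
        =ᶠ[nhds dL] Cf1 pihat lam D01 D10 dU := by
      filter_upwards [isOpen_Ioo.mem_nhds hdL] with y hy using (hd1 y hy).deriv
    rw [ev.deriv_eq, (hd2 dL hdL).deriv]
    exact key dL hdL
end

section
/- Fix δ_U > 1, π̂ ∈ (0,1), D₀₁, D₁₀ > 0, and for each λ̄ > 0 let δ_L*(λ̄) be the unique minimizer in (0,1) of δ_L ↦ C(δ_L, δ_U; λ̄). Then δ_L*(λ̄) → 1 as λ̄ → 0⁺ (equivalently, the optimal lower threshold γ_L* = log δ_L*(λ̄) tends to 0, recovering the no-switching-cost optimal algorithm). -/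
lemma g1_deriv {d : ℝ} (h0 : 0 < d) (h1 : d < 1) :
    HasDerivAt (fun x => Real.log x / (1 - x)) (((1-d)/d + Real.log d)/(1-d)^2) d := by
  have hne : (1:ℝ) - d ≠ 0 := by linarith
  have h := (Real.hasDerivAt_log h0.ne').div ((hasDerivAt_id d).const_sub 1) hne
  refine h.congr_deriv ?_
  have hd := h0.ne'
  simp only [id]
  field_simp
  ring

lemma g2_deriv {d : ℝ} (h0 : 0 < d) (h1 : d < 1) :
    HasDerivAt (fun x => x * Real.log x / (1 - x)) ((Real.log d + 1 - d)/(1-d)^2) d := by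
  have hne : (1:ℝ) - d ≠ 0 := by linarith
  have hnum : HasDerivAt (fun x : ℝ => x * Real.log x) (Real.log d + 1) d := by
    have := (hasDerivAt_id d).mul (Real.hasDerivAt_log h0.ne')
    refine this.congr_deriv ?_
    have hd := h0.ne'
    simp only [id]
    field_simp
  have h := hnum.div ((hasDerivAt_id d).const_sub 1) hne
  refine h.congr_deriv ?_
  simp only [id]
  field_simp
  ring

lemma log_gt {x : ℝ} (h0 : 0 < x) (h1 : x < 1) : 1 - 1/x < Real.log x := by
  have h := Real.log_lt_sub_one_of_pos (inv_pos.mpr h0) (by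
    intro h; rw [inv_eq_one] at h; linarith)
  rw [Real.log_inv] at h
  have : x⁻¹ = 1/x := (one_div x).symm
  linarith [this ▸ h]

lemma g1_mono : StrictMonoOn (fun x => Real.log x / (1 - x)) (Set.Ioo (0:ℝ) 1) := by
  apply strictMonoOn_of_deriv_pos (convex_Ioo 0 1)
  · intro x hx
    exact ((g1_deriv hx.1 hx.2).differentiableAt.continuousAt).continuousWithinAt
  · intro x hx
    rw [isOpen_Ioo.interior_eq] at hx
    obtain ⟨hxa, hxb⟩ := hx
    rw [(g1_deriv hxa hxb).deriv]
    have h1 : (0:ℝ) < 1 - x := by linarith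
    have hlog := log_gt hxa hxb
    have hx1 : (1-x)/x = 1/x - 1 := by rw [sub_div, div_self hxa.ne']
    apply div_pos
    · rw [hx1]; linarith
    · positivity

lemma g2_anti : StrictAntiOn (fun x => x * Real.log x / (1 - x)) (Set.Ioo (0:ℝ) 1) := by
  apply strictAntiOn_of_deriv_neg (convex_Ioo 0 1)
  · intro x hx
    exact ((g2_deriv hx.1 hx.2).differentiableAt.continuousAt).continuousWithinAt
  · intro x hx
    rw [isOpen_Ioo.interior_eq] at hx
    obtain ⟨hxa, hxb⟩ := hx
    rw [(g2_deriv hxa hxb).deriv]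
    have h1 : (0:ℝ) < 1 - x := by linarith
    have hlog := Real.log_lt_sub_one_of_pos hxa (by linarith)
    apply div_neg_of_neg_of_pos
    · linarith
    · positivity

lemma C_decomp (pihat lam D01 D10 d dU : ℝ) :
    C pihat lam D01 D10 d dU =
      C pihat 0 D01 D10 d dU + lam * ((dU - d) / (1 - d)) / (1 + pihat * (dU - 1)) := by
  unfold C; ring

lemma C0_eq (pihat D01 D10 dU : ℝ) {d : ℝ} (h0 : 0 < d) (h1 : d < 1)
    (hS : (1 + pihat * (dU - 1)) ≠ 0) (hD01 : D01 ≠ 0) (hD10 : D10 ≠ 0) :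
    C pihat 0 D01 D10 d dU =
      (1 - pihat) / (-D01) / (1 + pihat * (dU - 1)) * Real.log dU
      + pihat / D10 / (1 + pihat * (dU - 1)) * (dU * Real.log dU)
      + ((1 - pihat) / (-D01) / (1 + pihat * (dU - 1)) * (dU - 1)) * (Real.log d / (1 - d))
      + (pihat / D10 / (1 + pihat * (dU - 1)) * (dU - 1)) * (d * Real.log d / (1 - d)) := by
  have hne : (1:ℝ) - d ≠ 0 := by linarith
  unfold C
  field_simp
  ring

lemma C0_anti (pihat D01 D10 dU : ℝ)
    (hpi : pihat ∈ Set.Ioo (0:ℝ) 1)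
    (hD01 : 0 < D01) (hD10 : 0 < D10) (hdU : 1 < dU) :
    StrictAntiOn (fun d => C pihat 0 D01 D10 d dU) (Set.Ioo (0:ℝ) 1) := by
  obtain ⟨hpi0, hpi1⟩ := hpi
  have hS : 0 < 1 + pihat * (dU - 1) := by nlinarith
  intro a ha b hb hab
  simp only
  rw [C0_eq pihat D01 D10 dU ha.1 ha.2 hS.ne' hD01.ne' hD10.ne',
      C0_eq pihat D01 D10 dU hb.1 hb.2 hS.ne' hD01.ne' hD10.ne']
  have hK1 : (1 - pihat) / (-D01) / (1 + pihat * (dU - 1)) * (dU - 1) < 0 := by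
    apply mul_neg_of_neg_of_pos _ (by linarith)
    apply div_neg_of_neg_of_pos _ hS
    apply div_neg_of_pos_of_neg (by linarith) (by linarith)
  have hK2 : 0 < pihat / D10 / (1 + pihat * (dU - 1)) * (dU - 1) := by
    apply mul_pos (div_pos (div_pos hpi0 hD10) hS) (by linarith)
  have h1 := g1_mono ha hb hab
  have h2 := g2_anti ha hb hab
  simp only at h1 h2
  have e1 := mul_lt_mul_of_neg_left h1 hK1
  have e2 := mul_lt_mul_of_pos_left h2 hK2
  linarith

theorem stmt10 (pihat D01 D10 dU : ℝ)
    (hpi : pihat ∈ Set.Ioo (0:ℝ) 1)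
    (hD01 : 0 < D01) (hD10 : 0 < D10) (hdU : 1 < dU)
    (dstar : ℝ → ℝ)
    (hmin : ∀ lam > 0, dstar lam ∈ Set.Ioo (0:ℝ) 1 ∧
      IsMinOn (fun dL => C pihat lam D01 D10 dL dU) (Set.Ioo (0:ℝ) 1) (dstar lam)) :
    Filter.Tendsto dstar (nhdsWithin 0 (Set.Ioi (0:ℝ))) (nhds 1) := by
  obtain ⟨hpi0, hpi1⟩ := hpi
  have hS : 0 < 1 + pihat * (dU - 1) := by nlinarith
  have hanti := C0_anti pihat D01 D10 dU ⟨hpi0, hpi1⟩ hD01 hD10 hdU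
  rw [Metric.tendsto_nhds]
  intro ε hε
  set e := min ε (1/2) with he
  have he0 : 0 < e := lt_min hε (by norm_num)
  have he1 : e ≤ 1/2 := min_le_right _ _
  set a := 1 - e with ha_def
  set b := 1 - e/2 with hb_def
  have ha : a ∈ Set.Ioo (0:ℝ) 1 := ⟨by simp only [ha_def]; linarith, by simp only [ha_def]; linarith⟩
  have hb : b ∈ Set.Ioo (0:ℝ) 1 := ⟨by simp only [hb_def]; linarith, by simp only [hb_def]; linarith⟩
  have hab : a < b := by simp only [ha_def, hb_def]; linarith
  have hδ : 0 < C pihat 0 D01 D10 a dU - C pihat 0 D01 D10 b dU :=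
    sub_pos.mpr (hanti ha hb hab)
  set rb := ((dU - b) / (1 - b)) / (1 + pihat * (dU - 1)) with hrb_def
  have hrb : 0 < rb := by
    apply div_pos (div_pos (by linarith [hb.2]) (by linarith [hb.2])) hS
  set lam0 := (C pihat 0 D01 D10 a dU - C pihat 0 D01 D10 b dU) / rb with hlam0_def
  have hlam0 : 0 < lam0 := div_pos hδ hrb
  filter_upwards [Ioo_mem_nhdsGT_of_mem (show (0:ℝ) ∈ Set.Ico 0 lam0 from ⟨le_refl 0, hlam0⟩)]
    with lam hlam
  obtain ⟨hl0, hllam0⟩ := hlam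
  obtain ⟨hd, hmin'⟩ := hmin lam hl0
  have key : a < dstar lam := by
    by_contra hcon
    push_neg at hcon
    have h1 : C pihat 0 D01 D10 a dU ≤ C pihat 0 D01 D10 (dstar lam) dU := by
      rcases eq_or_lt_of_le hcon with h | h
      · rw [h]
      · exact le_of_lt (hanti hd ha h)
    have h2 : C pihat 0 D01 D10 (dstar lam) dU ≤ C pihat lam D01 D10 (dstar lam) dU := by
      rw [C_decomp pihat lam D01 D10 (dstar lam) dU]
      have hpos : 0 ≤ lam * ((dU - dstar lam) / (1 - dstar lam)) / (1 + pihat * (dU - 1)) := by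
        apply div_nonneg _ hS.le
        apply mul_nonneg hl0.le
        apply div_nonneg (by linarith [hd.2]) (by linarith [hd.2])
      linarith
    have h3 : C pihat lam D01 D10 (dstar lam) dU ≤ C pihat lam D01 D10 b dU :=
      isMinOn_iff.mp hmin' b hb
    have h4 : C pihat lam D01 D10 b dU < C pihat 0 D01 D10 a dU := by
      rw [C_decomp pihat lam D01 D10 b dU]
      have heq : lam * ((dU - b) / (1 - b)) / (1 + pihat * (dU - 1)) = lam * rb := by
        rw [hrb_def]; ring
      have hlt : lam * rb < lam0 * rb := by
        exact mul_lt_mul_of_pos_right hllam0 hrb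
      have heq2 : lam0 * rb = C pihat 0 D01 D10 a dU - C pihat 0 D01 D10 b dU := by
        rw [hlam0_def]; field_simp
      rw [heq]
      linarith
    linarith
  have hdist : dist (dstar lam) 1 = 1 - dstar lam := by
    rw [Real.dist_eq, abs_of_nonpos (by linarith [hd.2])]; ring
  rw [hdist]
  have h5 : 1 - dstar lam < e := by
    have := key
    simp only [ha_def] at this
    linarith
  linarith [min_le_left ε (1/2)]
end

section
/- Fix δ_U > 1, π̂ ∈ (0,1), D₀₁, D₁₀ > 0. The unique minimizer δ_L*(λ̄) ∈ (0,1) of δ_L ↦ C(δ_L, δ_U; λ̄) is a monotonically nonincreasing function of λ̄ > 0. -/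
open Set

theorem le_of_isMinOn_add_mul {α R : Type*} [LinearOrder α] [CommRing R] [LinearOrder R]
    [IsStrictOrderedRing R] {s : Set α} {h g : α → R} (hg : StrictMonoOn g s) {l₁ l₂ : R}
    (hl : l₁ < l₂) {x₁ x₂ : α} (hx₁ : x₁ ∈ s) (hx₂ : x₂ ∈ s)
    (hmin₁ : IsMinOn (fun x => h x + l₁ * g x) s x₁)
    (hmin₂ : IsMinOn (fun x => h x + l₂ * g x) s x₂) : x₂ ≤ x₁ := by
  by_contra! hlt
  have hgx : g x₁ < g x₂ := hg hx₁ hx₂ hlt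
  have h₁ : h x₁ + l₁ * g x₁ ≤ h x₂ + l₁ * g x₂ := hmin₁ hx₂
  have h₂ : h x₂ + l₂ * g x₂ ≤ h x₁ + l₂ * g x₁ := hmin₂ hx₁
  nlinarith [mul_pos (sub_pos.2 hl) (sub_pos.2 hgx)]

theorem strictMonoOn_sub_div_one_sub {a : ℝ} (ha : 1 < a) :
    StrictMonoOn (fun x => (a - x) / (1 - x)) (Iio 1) := by
  intro x hx y hy hxy
  have hx' : 0 < 1 - x := sub_pos.2 hx
  have hy' : 0 < 1 - y := sub_pos.2 hy
  rw [div_lt_div_iff₀ hx' hy']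
  nlinarith

theorem C_eq_C_zero_add (pihat lam D01 D10 dL dU : ℝ) :
    C pihat lam D01 D10 dL dU =
      C pihat 0 D01 D10 dL dU + lam * ((dU - dL) / (1 - dL) / (1 + pihat * (dU - 1))) := by
  simp only [C]
  ring

theorem stmt11_general (pihat D01 D10 dU : ℝ)
    (hpi : pihat ∈ Set.Ioo (0:ℝ) 1)
    (hdU : 1 < dU)
    (dstar : ℝ → ℝ)
    (hmin : ∀ lam > 0, dstar lam ∈ Set.Ioo (0:ℝ) 1 ∧
      IsMinOn (fun dL => C pihat lam D01 D10 dL dU) (Set.Ioo (0:ℝ) 1) (dstar lam)) :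
    ∀ lam₁ lam₂ : ℝ, 0 < lam₁ → lam₁ ≤ lam₂ → dstar lam₂ ≤ dstar lam₁ := by
  intro lam₁ lam₂ hlam₁ hle
  rcases hle.eq_or_lt with rfl | hlt
  · rfl
  have hk : 0 < 1 + pihat * (dU - 1) := by nlinarith [hpi.1]
  have hg : StrictMonoOn (fun dL => (dU - dL) / (1 - dL) / (1 + pihat * (dU - 1))) (Ioo 0 1) :=
    fun x hx y hy hxy => div_lt_div_of_pos_right
      (strictMonoOn_sub_div_one_sub hdU (Ioo_subset_Iio_self hx) (Ioo_subset_Iio_self hy) hxy) hk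
  have hC : ∀ lam, (fun dL => C pihat lam D01 D10 dL dU) = fun dL =>
      C pihat 0 D01 D10 dL dU + lam * ((dU - dL) / (1 - dL) / (1 + pihat * (dU - 1))) :=
    fun lam => funext fun dL => C_eq_C_zero_add pihat lam D01 D10 dL dU
  obtain ⟨hmem₁, hmin₁⟩ := hmin lam₁ hlam₁
  obtain ⟨hmem₂, hmin₂⟩ := hmin lam₂ (hlam₁.trans hlt)
  rw [hC] at hmin₁ hmin₂
  exact le_of_isMinOn_add_mul hg hlt hmem₁ hmem₂ hmin₁ hmin₂

theorem stmt11 (pihat D01 D10 dU : ℝ)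
    (hpi : pihat ∈ Set.Ioo (0:ℝ) 1)
    (hD01 : 0 < D01) (hD10 : 0 < D10) (hdU : 1 < dU)
    (dstar : ℝ → ℝ)
    (hmin : ∀ lam > 0, dstar lam ∈ Set.Ioo (0:ℝ) 1 ∧
      IsMinOn (fun dL => C pihat lam D01 D10 dL dU) (Set.Ioo (0:ℝ) 1) (dstar lam)) :
    ∀ lam₁ lam₂ : ℝ, 0 < lam₁ → lam₁ ≤ lam₂ → dstar lam₂ ≤ dstar lam₁ :=
  stmt11_general pihat D01 D10 dU hpi hdU dstar hmin
end
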